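/- arXiv:2305.00164 — 2 statements merged into one kernel-verified Lean document; each statement's English description precedes it below -/
import Mathlib

section
/- For every convex f in F and ε > 0, the local modulus of continuity of the minimizer is sandwiched by the water-filling width: ρ_z(ε; f) ≤ ω_z(ε; f) ≤ 3 ρ_z(ε; f). -/
/-!
Lower bound: if `f t < u` for an admissible truncation level `u` (one with `‖f - f_u‖₂ ≤ ε`),
then `t` is the unique minimizer of `max f V`, where `V` is a V-shaped function with apex
`(t, f t)` reaching height `u` at distance 1; it is convex and lies between `f` and `f_u`, hence is
`ε`-close to `f`. By convexity, points of the level set `{f ≤ M + ρ_m}` are limits of such `t`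
along segments from `z`.

Upper bound: the water `(a - f)₊` below `a = M + ρ_m` has squared mass at least `ε²` and lives in
`[z - ρ_z, z + ρ_z]`. If an `ε`-close convex `g` had its minimizer `zg` beyond `z + 3ρ_z`, pick `p`
just right of the level set. By midpoint convexity the water left of `p` is dominated by the
reflected `(f - a)₊` on `[p, 2p - q] ⊆ [p, zg]`. If `g p ≥ a`, then `g ≥ a` left of `p` (`g`
decreases up to `zg`), so `(f - g)²` dominates the water there and is positive on `[p, zg]`;
if `g p < a`, then `f - g > f - a > 0` on `[p, zg]`. Either way `‖f - g‖₂ > ε`.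
-/

open MeasureTheory Set

/-- L2 distance between two functions on [0,1]. -/
noncomputable def L2 (f g : ℝ → ℝ) : ℝ :=
  Real.sqrt (∫ t in (0:ℝ)..1, (f t - g t) ^ 2)

/-- Truncation f_u(t) = max{f(t), u}. -/
def trunc (f : ℝ → ℝ) (u : ℝ) : ℝ → ℝ := fun t => max (f t) u

/-- z is the unique minimizer of f on [0,1]. -/
def UniqueMinOn (f : ℝ → ℝ) (z : ℝ) : Prop :=
  z ∈ Icc (0:ℝ) 1 ∧ ∀ t ∈ Icc (0:ℝ) 1, t ≠ z → f z < f t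

/-- Water-filling depth ρ_m(ε; f), where Mf is the minimum of f. -/
noncomputable def rhoM (ε : ℝ) (f : ℝ → ℝ) (Mf : ℝ) : ℝ :=
  sSup {v | ∃ u, v = u - Mf ∧ L2 f (trunc f u) ≤ ε}

/-- Water-filling width ρ_z(ε; f), where Zf is the minimizer and Mf the minimum of f. -/
noncomputable def rhoZ (ε : ℝ) (f : ℝ → ℝ) (Zf Mf : ℝ) : ℝ :=
  sSup {v | ∃ t ∈ Icc (0:ℝ) 1, v = |t - Zf| ∧ f t ≤ rhoM ε f Mf + Mf}

/-- Local modulus of continuity of the minimum. -/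
noncomputable def omegaM (ε : ℝ) (f : ℝ → ℝ) (Mf : ℝ) : ℝ :=
  sSup {v | ∃ g zg, ConvexOn ℝ (Icc (0:ℝ) 1) g ∧ UniqueMinOn g zg ∧
    L2 f g ≤ ε ∧ v = |Mf - g zg|}

/-- Local modulus of continuity of the minimizer. -/
noncomputable def omegaZ (ε : ℝ) (f : ℝ → ℝ) (Zf : ℝ) : ℝ :=
  sSup {v | ∃ g zg, ConvexOn ℝ (Icc (0:ℝ) 1) g ∧ UniqueMinOn g zg ∧
    L2 f g ≤ ε ∧ v = |Zf - zg|}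

theorem intervalIntegrable_of_continuousOn_Ioo_of_mapsTo {E : Type*} [NormedAddCommGroup E]
    {F : ℝ → E} {a b : ℝ} {K : Set E} (hab : a ≤ b) (hF : ContinuousOn F (Ioo a b))
    (hK : IsCompact K) (hFK : MapsTo F (Ioo a b) K) : IntervalIntegrable F volume a b := by
  rw [intervalIntegrable_iff_integrableOn_Ioo_of_le hab]
  obtain ⟨C, hC⟩ := hK.isBounded.exists_norm_le
  exact ⟨hF.aestronglyMeasurable measurableSet_Ioo, .restrict_of_bounded C measure_Ioo_lt_top
    (ae_restrict_of_forall_mem measurableSet_Ioo fun t ht => hC _ (hFK ht))⟩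

theorem IntervalIntegrable.mono_Icc {F : ℝ → ℝ} {a b c d : ℝ}
    (hF : IntervalIntegrable F volume a b) (hab : a ≤ b) (hc : c ∈ Icc a b) (hd : d ∈ Icc a b) :
    IntervalIntegrable F volume c d :=
  hF.mono_set (uIcc_subset_uIcc (by rwa [uIcc_of_le hab]) (by rwa [uIcc_of_le hab]))

theorem ConvexOn.continuousOn_Ioo {f : ℝ → ℝ} {a b : ℝ} (hf : ConvexOn ℝ (Icc a b) f) :
    ContinuousOn f (Ioo a b) :=
  (hf.subset Ioo_subset_Icc_self (convex_Ioo a b)).continuousOn isOpen_Ioo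

theorem ConvexOn.comp_one_sub {f : ℝ → ℝ} (hf : ConvexOn ℝ (Icc 0 1) f) :
    ConvexOn ℝ (Icc 0 1) (fun s => f (1 - s)) := by
  refine ⟨convex_Icc 0 1, fun x hx y hy c d hc hd hcd => ?_⟩
  have h := hf.2 (x := 1 - x) (y := 1 - y) ⟨by linarith [hx.2], by linarith [hx.1]⟩
    ⟨by linarith [hy.2], by linarith [hy.1]⟩ hc hd hcd
  convert h using 2
  simp only [smul_eq_mul]
  linear_combination -hcd

theorem integral_zero_one_comp_one_sub (F : ℝ → ℝ) :
    ∫ t in (0:ℝ)..1, F (1 - t) = ∫ t in (0:ℝ)..1, F t := by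
  simp [intervalIntegral.integral_comp_sub_left (a := 0) (b := 1) F 1]

namespace UniqueMinOn

variable {f : ℝ → ℝ} {z : ℝ}

theorem min_le (hz : UniqueMinOn f z) {t : ℝ} (ht : t ∈ Icc (0:ℝ) 1) : f z ≤ f t := by
  rcases eq_or_ne t z with rfl | htz
  · exact le_rfl
  · exact (hz.2 t ht htz).le

theorem mapsTo_Icc (hf : ConvexOn ℝ (Icc 0 1) f) (hz : UniqueMinOn f z) :
    MapsTo f (Icc 0 1) (Icc (f z) (max (f 0) (f 1))) :=
  fun _ ht => ⟨hz.min_le ht, hf.le_max_of_mem_Icc (by simp) (by simp) ht⟩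

theorem comp_one_sub (hz : UniqueMinOn f z) : UniqueMinOn (fun s => f (1 - s)) (1 - z) := by
  refine ⟨⟨by linarith [hz.1.2], by linarith [hz.1.1]⟩, fun t ht htz => ?_⟩
  simpa using hz.2 (1 - t) ⟨by linarith [ht.2], by linarith [ht.1]⟩ (by contrapose! htz; linarith)

theorem strictMonoOn (hf : ConvexOn ℝ (Icc 0 1) f) (hz : UniqueMinOn f z) :
    StrictMonoOn f (Icc z 1) := by
  intro s hs t ht hst
  have ht' : t ∈ Icc (0:ℝ) 1 := ⟨hz.1.1.trans ht.1, ht.2⟩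
  rcases hs.1.eq_or_lt with rfl | hzs
  · exact hz.2 t ht' hst.ne'
  have hslope := hf.slope_mono_adjacent hz.1 ht' hzs hst
  have hpos : 0 < (f s - f z) / (s - z) :=
    div_pos (sub_pos.2 (hz.2 s ⟨hz.1.1.trans hs.1, hs.2⟩ hzs.ne')) (sub_pos.2 hzs)
  exact sub_pos.1 ((div_pos_iff_of_pos_right (sub_pos.2 hst)).1 (hpos.trans_le hslope))

theorem strictAntiOn (hf : ConvexOn ℝ (Icc 0 1) f) (hz : UniqueMinOn f z) :
    StrictAntiOn f (Icc 0 z) := by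
  intro s hs t ht hst
  simpa using hz.comp_one_sub.strictMonoOn hf.comp_one_sub
    (a := 1 - t) (b := 1 - s) ⟨by linarith [ht.2], by linarith [ht.1]⟩
    ⟨by linarith [hs.2], by linarith [hs.1]⟩ (by linarith)

end UniqueMinOn

theorem intervalIntegrable_comp_of_uniqueMinOn {f g : ℝ → ℝ} {z zg : ℝ}
    (hf : ConvexOn ℝ (Icc 0 1) f) (hz : UniqueMinOn f z)
    (hg : ConvexOn ℝ (Icc 0 1) g) (hzg : UniqueMinOn g zg)
    (Φ : ℝ × ℝ → ℝ) (hΦ : Continuous Φ) :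
    IntervalIntegrable (fun t => Φ (f t, g t)) volume 0 1 :=
  intervalIntegrable_of_continuousOn_Ioo_of_mapsTo zero_le_one
    (hΦ.comp_continuousOn (hf.continuousOn_Ioo.prodMk hg.continuousOn_Ioo))
    ((isCompact_Icc.prod isCompact_Icc).image hΦ)
    fun _ ht => mem_image_of_mem Φ
      ⟨hz.mapsTo_Icc hf (Ioo_subset_Icc_self ht), hzg.mapsTo_Icc hg (Ioo_subset_Icc_self ht)⟩

theorem sq_sub_trunc (f : ℝ → ℝ) (u t : ℝ) : (f t - trunc f u t) ^ 2 = (max (u - f t) 0) ^ 2 := by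
  rcases le_total u (f t) with h | h
  · simp [trunc, h]
  · simp only [trunc, max_eq_right h, max_eq_left (sub_nonneg.2 h)]
    ring

theorem L2_self (f : ℝ → ℝ) : L2 f f = 0 := by
  simp [L2]

theorem L2_le_L2_of_le_of_le {f g h : ℝ → ℝ}
    (hg : IntervalIntegrable (fun t => (f t - g t) ^ 2) volume 0 1)
    (hh : IntervalIntegrable (fun t => (f t - h t) ^ 2) volume 0 1)
    (hfg : ∀ t ∈ Icc (0:ℝ) 1, f t ≤ g t) (hgh : ∀ t ∈ Icc (0:ℝ) 1, g t ≤ h t) :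
    L2 f g ≤ L2 f h :=
  Real.sqrt_le_sqrt <| intervalIntegral.integral_mono_on zero_le_one hg hh fun t ht => by
    nlinarith [hfg t ht, hgh t ht]

section WaterLevel

variable {f : ℝ → ℝ} {z ε : ℝ}

theorem UniqueMinOn.L2_trunc_self (hz : UniqueMinOn f z) : L2 f (trunc f (f z)) = 0 := by
  rw [L2, intervalIntegral.integral_congr (g := fun _ => 0)]
  · simp
  · intro t ht
    rw [uIcc_of_le zero_le_one] at ht
    simp [sq_sub_trunc, hz.min_le ht]

theorem UniqueMinOn.sub_le_L2_trunc (hf : ConvexOn ℝ (Icc 0 1) f) (hz : UniqueMinOn f z)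
    (u : ℝ) : u - max (f 0) (f 1) ≤ L2 f (trunc f u) := by
  set B := max (f 0) (f 1)
  rcases le_or_gt u B with hu | hu
  · exact (sub_nonpos.2 hu).trans (Real.sqrt_nonneg _)
  have hint : IntervalIntegrable (fun t => (f t - trunc f u t) ^ 2) volume 0 1 :=
    intervalIntegrable_comp_of_uniqueMinOn hf hz hf hz (fun p => (p.1 - max p.2 u) ^ 2)
      (by fun_prop)
  have hle : ∀ t ∈ Icc (0:ℝ) 1, (u - B) ^ 2 ≤ (f t - trunc f u t) ^ 2 := fun t ht => by
    rw [sq_sub_trunc]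
    exact pow_le_pow_left₀ (sub_nonneg.2 hu.le)
      (le_max_of_le_left (by linarith [(hz.mapsTo_Icc hf ht).2])) 2
  calc u - B = √((u - B) ^ 2) := (Real.sqrt_sq (sub_nonneg.2 hu.le)).symm
    _ ≤ L2 f (trunc f u) := Real.sqrt_le_sqrt <| by
      simpa using intervalIntegral.integral_mono_on zero_le_one intervalIntegrable_const hint hle

theorem bddAbove_rhoM_set (hf : ConvexOn ℝ (Icc 0 1) f) (hz : UniqueMinOn f z) :
    BddAbove {v | ∃ u, v = u - f z ∧ L2 f (trunc f u) ≤ ε} :=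
  ⟨max (f 0) (f 1) + ε - f z, by
    rintro _ ⟨u, rfl, hu⟩
    linarith [hz.sub_le_L2_trunc hf u]⟩

theorem sub_le_rhoM (hf : ConvexOn ℝ (Icc 0 1) f) (hz : UniqueMinOn f z) {u : ℝ}
    (hu : L2 f (trunc f u) ≤ ε) : u - f z ≤ rhoM ε f (f z) :=
  le_csSup (bddAbove_rhoM_set hf hz) ⟨u, rfl, hu⟩

theorem rhoM_nonneg (hf : ConvexOn ℝ (Icc 0 1) f) (hz : UniqueMinOn f z) (hε : 0 ≤ ε) :
    0 ≤ rhoM ε f (f z) := by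
  simpa using sub_le_rhoM hf hz (hz.L2_trunc_self.trans_le hε)

theorem exists_L2_trunc_le_of_lt_rhoM (hz : UniqueMinOn f z) (hε : 0 ≤ ε) {v : ℝ}
    (hv : v < rhoM ε f (f z)) : ∃ u, v < u - f z ∧ L2 f (trunc f u) ≤ ε := by
  obtain ⟨_, ⟨u, rfl, hu⟩, hvu⟩ := exists_lt_of_lt_csSup
    (s := {v | ∃ u, v = u - f z ∧ L2 f (trunc f u) ≤ ε})
    ⟨0, f z, (sub_self _).symm, hz.L2_trunc_self.trans_le hε⟩ hv
  exact ⟨u, hvu, hu⟩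

theorem sq_le_integral_water (hf : ConvexOn ℝ (Icc 0 1) f) (hz : UniqueMinOn f z)
    (hε : 0 ≤ ε) : ε ^ 2 ≤ ∫ t in (0:ℝ)..1, (max (rhoM ε f (f z) + f z - f t) 0) ^ 2 := by
  set m := rhoM ε f (f z)
  set W := ∫ t in (0:ℝ)..1, (max (m + f z - f t) 0) ^ 2
  have hm := rhoM_nonneg hf hz hε
  have hW : IntervalIntegrable (fun t => (max (m + f z - f t) 0) ^ 2) volume 0 1 :=
    intervalIntegrable_comp_of_uniqueMinOn hf hz hf hz (fun p => (max (m + f z - p.1) 0) ^ 2)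
      (by fun_prop)
  -- Every level above `M + ρ_m` violates the constraint, and raising the level by `δ` adds at
  -- most `2δρ_m + δ²` to the integrand.
  have hlevel : ∀ δ > 0, ε ^ 2 < W + (2 * δ * m + δ ^ 2) := by
    intro δ hδ
    have hgt : ε < L2 f (trunc f (m + f z + δ)) := by
      by_contra! h
      linarith [sub_le_rhoM hf hz h]
    have hint : IntervalIntegrable (fun t => (f t - trunc f (m + f z + δ) t) ^ 2) volume 0 1 :=
      intervalIntegrable_comp_of_uniqueMinOn hf hz hf hz
        (fun p => (p.1 - max p.2 (m + f z + δ)) ^ 2) (by fun_prop)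
    have hle : ∀ t ∈ Icc (0:ℝ) 1, (f t - trunc f (m + f z + δ) t) ^ 2 ≤
        (max (m + f z - f t) 0) ^ 2 + (2 * δ * m + δ ^ 2) := fun t ht => by
      have h1 : max (m + f z + δ - f t) 0 ≤ max (m + f z - f t) 0 + δ :=
        max_le (by linarith [le_max_left (m + f z - f t) 0]) (by positivity)
      have h2 : max (m + f z - f t) 0 ≤ m := max_le (by linarith [hz.min_le ht]) hm
      rw [sq_sub_trunc]
      nlinarith [pow_le_pow_left₀ (le_max_right _ _) h1 2, le_max_right (m + f z - f t) 0]
    have := intervalIntegral.integral_mono_on zero_le_one hint (hW.add intervalIntegrable_const) hle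
    rw [intervalIntegral.integral_add hW intervalIntegrable_const] at this
    have hsq := (Real.lt_sqrt hε).1 hgt
    simp only [intervalIntegral.integral_const, sub_zero, one_smul] at this
    linarith
  by_contra! h
  set δ := min 1 ((ε ^ 2 - W) / (2 * m + 1))
  have hδ : 0 < δ := lt_min one_pos (div_pos (sub_pos.2 h) (by linarith))
  have hδm : δ * (2 * m + 1) ≤ ε ^ 2 - W := (le_div_iff₀ (by linarith)).1 (min_le_right _ _)
  nlinarith [hlevel δ hδ, min_le_left 1 ((ε ^ 2 - W) / (2 * m + 1))]

end WaterLevel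

theorem exists_convexOn_uniqueMinOn_between {f : ℝ → ℝ} (hf : ConvexOn ℝ (Icc 0 1) f)
    {t u : ℝ} (ht : t ∈ Icc (0:ℝ) 1) (hu : f t < u) :
    ∃ G : ℝ → ℝ, ConvexOn ℝ (Icc 0 1) G ∧ UniqueMinOn G t ∧
      ∀ s ∈ Icc (0:ℝ) 1, f s ≤ G s ∧ G s ≤ trunc f u s := by
  set cone : ℝ → ℝ := fun s => f t + (u - f t) * dist s t
  have hcone : ConvexOn ℝ (Icc 0 1) cone :=
    (convexOn_const (f t) (convex_Icc 0 1)).add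
      ((convexOn_dist t (convex_Icc 0 1)).smul (sub_nonneg.2 hu.le))
  refine ⟨f ⊔ cone, hf.sup hcone, ⟨ht, fun s _ hst => ?_⟩, fun s hs => ⟨le_max_left _ _, ?_⟩⟩
  · have : 0 < (u - f t) * dist s t := mul_pos (sub_pos.2 hu) (dist_pos.2 hst)
    simp only [Pi.sup_apply, cone, dist_self, mul_zero, add_zero, max_self]
    exact lt_max_of_lt_right (by linarith)
  · have hdist : dist s t ≤ 1 := by
      rw [Real.dist_eq]
      exact abs_sub_le_of_nonneg_of_le hs.1 hs.2 ht.1 ht.2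
    refine max_le_max le_rfl ?_
    nlinarith [sub_pos.2 hu]

section Minimizer

variable {f : ℝ → ℝ} {z ε : ℝ}

theorem abs_sub_le_omegaZ (hz : z ∈ Icc (0:ℝ) 1) {g : ℝ → ℝ} {zg : ℝ}
    (hg : ConvexOn ℝ (Icc 0 1) g) (hzg : UniqueMinOn g zg) (hfg : L2 f g ≤ ε) :
    |z - zg| ≤ omegaZ ε f z :=
  le_csSup ⟨1, by
    rintro _ ⟨g, zg, -, hzg, -, rfl⟩
    exact abs_sub_le_of_nonneg_of_le hz.1 hz.2 hzg.1.1 hzg.1.2⟩ ⟨g, zg, hg, hzg, hfg, rfl⟩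

theorem abs_sub_le_omegaZ_of_lt_trunc (hf : ConvexOn ℝ (Icc 0 1) f) (hz : UniqueMinOn f z)
    {t u : ℝ} (ht : t ∈ Icc (0:ℝ) 1) (hu : L2 f (trunc f u) ≤ ε) (htu : f t < u) :
    |z - t| ≤ omegaZ ε f z := by
  obtain ⟨G, hG, hGt, hfG⟩ := exists_convexOn_uniqueMinOn_between hf ht htu
  refine abs_sub_le_omegaZ hz.1 hG hGt (le_trans (L2_le_L2_of_le_of_le ?_ ?_
    (fun s hs => (hfG s hs).1) (fun s hs => (hfG s hs).2)) hu)
  · exact intervalIntegrable_comp_of_uniqueMinOn hf hz hG hGt (fun p => (p.1 - p.2) ^ 2)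
      (by fun_prop)
  · exact intervalIntegrable_comp_of_uniqueMinOn hf hz hf hz (fun p => (p.1 - max p.2 u) ^ 2)
      (by fun_prop)

theorem abs_sub_le_omegaZ_of_le_level (hf : ConvexOn ℝ (Icc 0 1) f) (hz : UniqueMinOn f z)
    (hε : 0 ≤ ε) {t : ℝ} (ht : t ∈ Icc (0:ℝ) 1) (hft : f t ≤ rhoM ε f (f z) + f z) :
    |t - z| ≤ omegaZ ε f z := by
  rcases eq_or_ne t z with rfl | htz
  · simpa using abs_sub_le_omegaZ hz.1 hf hz ((L2_self f).trans_le hε)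
  have hm : 0 < rhoM ε f (f z) := by linarith [hz.2 t ht htz]
  refine le_of_forall_pos_le_add fun κ hκ => ?_
  -- By convexity `f` lies strictly below `M(f) + ρ_m(ε; f)` at `(1 - θ) z + θ t`, hence below
  -- some admissible truncation level.
  set θ := max (1 - κ) 0
  have hθ0 : 0 ≤ θ := le_max_right _ _
  have hθ1 : θ < 1 := max_lt (by linarith) one_pos
  obtain ⟨u, hθu, hu⟩ := exists_L2_trunc_le_of_lt_rhoM hz hε
    (show θ * rhoM ε f (f z) < rhoM ε f (f z) by nlinarith)
  have ht' : (1 - θ) * z + θ * t ∈ Icc (0:ℝ) 1 :=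
    convex_Icc 0 1 hz.1 ht (sub_nonneg.2 hθ1.le) hθ0 (sub_add_cancel 1 θ)
  have hft' : f ((1 - θ) * z + θ * t) < u := by
    have := hf.2 hz.1 ht (sub_nonneg.2 hθ1.le) hθ0 (sub_add_cancel 1 θ)
    simp only [smul_eq_mul] at this
    nlinarith
  have hdist : |z - ((1 - θ) * z + θ * t)| = θ * |t - z| := by
    rw [show z - ((1 - θ) * z + θ * t) = θ * (z - t) by ring, abs_mul, abs_of_nonneg hθ0,
      abs_sub_comm]
  have hκ' : (1 - θ) * |t - z| ≤ κ := by
    nlinarith [abs_sub_le_of_nonneg_of_le ht.1 ht.2 hz.1.1 hz.1.2, le_max_left (1 - κ) 0]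
  linarith [abs_sub_le_omegaZ_of_lt_trunc hf hz ht' hu hft']

theorem rhoZ_le_omegaZ (hf : ConvexOn ℝ (Icc 0 1) f) (hz : UniqueMinOn f z) (hε : 0 ≤ ε) :
    rhoZ ε f z (f z) ≤ omegaZ ε f z :=
  csSup_le ⟨0, z, hz.1, by simp, by linarith [rhoM_nonneg hf hz hε]⟩ <| by
    rintro _ ⟨t, ht, rfl, hft⟩
    exact abs_sub_le_omegaZ_of_le_level hf hz hε ht hft

end Minimizer

theorem StrictMonoOn.integral_sq_pos {h : ℝ → ℝ} {c d : ℝ} (hh : StrictMonoOn h (Icc c d))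
    (hcd : c < d) (hint : IntervalIntegrable (fun t => h t ^ 2) volume c d) :
    0 < ∫ t in c..d, h t ^ 2 := by
  obtain ⟨r, hcr, hrd⟩ := exists_between hcd
  have hr : r ∈ Icc c d := ⟨hcr.le, hrd.le⟩
  have hcr_int := hint.mono_Icc hcd.le (left_mem_Icc.2 hcd.le) hr
  have hrd_int := hint.mono_Icc hcd.le hr (right_mem_Icc.2 hcd.le)
  rw [← intervalIntegral.integral_add_adjacent_intervals hcr_int hrd_int]
  rcases le_or_gt (h r) 0 with hr0 | hr0
  · have := intervalIntegral.intervalIntegral_pos_of_pos_on hcr_int (fun t ht => sq_pos_of_neg <|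
      (hh ⟨ht.1.le, ht.2.le.trans hrd.le⟩ hr ht.2).trans_le hr0) hcr
    linarith [intervalIntegral.integral_nonneg (μ := volume) hrd.le fun t _ => sq_nonneg (h t)]
  · have := intervalIntegral.intervalIntegral_pos_of_pos_on hrd_int (fun t ht => sq_pos_of_pos <|
      hr0.trans (hh hr ⟨hcr.le.trans ht.1.le, ht.2.le⟩ ht.1)) hrd
    linarith [intervalIntegral.integral_nonneg (μ := volume) hcr.le fun t _ => sq_nonneg (h t)]

theorem integral_water_eq_of_le_off {f : ℝ → ℝ} {a c d : ℝ} (hc : 0 ≤ c) (hcd : c ≤ d)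
    (hd : d ≤ 1) (h : ∀ t ∈ Ioc (0:ℝ) 1, t ∉ Ioc c d → a ≤ f t) :
    ∫ t in (0:ℝ)..1, (max (a - f t) 0) ^ 2 = ∫ t in c..d, (max (a - f t) 0) ^ 2 := by
  rw [intervalIntegral.integral_of_le zero_le_one, intervalIntegral.integral_of_le hcd]
  refine setIntegral_eq_of_subset_of_forall_sdiff_eq_zero measurableSet_Ioc
    (Ioc_subset_Ioc hc hd) fun t ht => ?_
  simp [h t ht.1 ht.2]

theorem integral_water_le_integral_reflect {f : ℝ → ℝ} {z : ℝ} (hf : ConvexOn ℝ (Icc 0 1) f)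
    (hz : UniqueMinOn f z) {a c p : ℝ} (hc : 0 ≤ c) (hcp : c ≤ p) (hp : 2 * p - c ≤ 1)
    (hap : a ≤ f p) :
    ∫ t in c..p, (max (a - f t) 0) ^ 2 ≤ ∫ t in p..2 * p - c, (max (f t - a) 0) ^ 2 := by
  have hW : IntervalIntegrable (fun t => (max (a - f t) 0) ^ 2) volume 0 1 :=
    intervalIntegrable_comp_of_uniqueMinOn hf hz hf hz (fun q => (max (a - q.1) 0) ^ 2)
      (by fun_prop)
  have hR : IntervalIntegrable (fun t => (max (f t - a) 0) ^ 2) volume 0 1 :=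
    intervalIntegrable_comp_of_uniqueMinOn hf hz hf hz (fun q => (max (q.1 - a) 0) ^ 2)
      (by fun_prop)
  have hR' := (hR.mono_Icc (c := p) (d := 2 * p - c) zero_le_one ⟨by linarith, by linarith⟩
    ⟨by linarith, hp⟩).comp_sub_left (2 * p)
  have hrefl := intervalIntegral.integral_comp_sub_left (a := c) (b := p)
    (fun t => (max (f t - a) 0) ^ 2) (2 * p)
  rw [show 2 * p - p = p by ring, sub_sub_cancel] at hR'
  rw [show 2 * p - p = p by ring] at hrefl
  rw [← hrefl]
  refine intervalIntegral.integral_mono_on hcp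
    (hW.mono_Icc zero_le_one ⟨hc, by linarith⟩ ⟨by linarith, by linarith⟩) hR'.symm
    fun t ht => pow_le_pow_left₀ (le_max_right _ _) (max_le_max ?_ le_rfl) 2
  have hmid := hf.2 (x := t) (y := 2 * p - t) ⟨by linarith [ht.1], by linarith [ht.2]⟩
    ⟨by linarith [ht.2], by linarith [ht.1]⟩ (by norm_num : (0:ℝ) ≤ 1 / 2)
    (by norm_num : (0:ℝ) ≤ 1 / 2) (by norm_num)
  simp only [smul_eq_mul] at hmid
  rw [show 1 / 2 * t + 1 / 2 * (2 * p - t) = p by ring] at hmid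
  linarith

theorem sq_max_sub_le_sq_sub {a x y : ℝ} (h : a ≤ y) : (max (a - x) 0) ^ 2 ≤ (x - y) ^ 2 := by
  rw [← sq_abs (x - y)]
  exact pow_le_pow_left₀ (le_max_right _ _)
    (max_le (by linarith [neg_abs_le (x - y)]) (abs_nonneg _)) 2

theorem sq_max_sub_lt_sq_sub {a x y : ℝ} (hy : y < a) (hx : a < x) :
    (max (x - a) 0) ^ 2 < (x - y) ^ 2 := by
  rw [max_eq_left (by linarith)]
  exact pow_lt_pow_left₀ (by linarith) (by linarith) two_ne_zero

theorem integral_water_lt_integral_sq_sub {f g : ℝ → ℝ} {z zg a c p : ℝ}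
    (hf : ConvexOn ℝ (Icc 0 1) f) (hz : UniqueMinOn f z)
    (hg : ConvexOn ℝ (Icc 0 1) g) (hzg : UniqueMinOn g zg)
    (hc : 0 ≤ c) (hcp : c < p) (hzp : z ≤ p) (hpzg : 2 * p - c ≤ zg) (hap : a < f p) :
    ∫ t in c..p, (max (a - f t) 0) ^ 2 < ∫ t in c..zg, (f t - g t) ^ 2 := by
  have hzg1 := hzg.1.2
  have hpzg' : p < zg := by linarith
  have hD : IntervalIntegrable (fun t => (f t - g t) ^ 2) volume 0 1 :=
    intervalIntegrable_comp_of_uniqueMinOn hf hz hg hzg (fun q => (q.1 - q.2) ^ 2) (by fun_prop)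
  have hDcp := hD.mono_Icc (c := c) (d := p) zero_le_one ⟨hc, by linarith⟩
    ⟨by linarith, by linarith⟩
  have hDpz := hD.mono_Icc (c := p) (d := zg) zero_le_one ⟨by linarith, by linarith⟩
    ⟨by linarith, hzg1⟩
  have hfmono : MonotoneOn f (Icc p zg) :=
    (hz.strictMonoOn hf).monotoneOn.mono (Icc_subset_Icc hzp hzg1)
  have hganti : StrictAntiOn g (Icc c zg) :=
    (hzg.strictAntiOn hg).mono (Icc_subset_Icc hc le_rfl)
  rw [← intervalIntegral.integral_add_adjacent_intervals hDcp hDpz]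
  rcases le_or_gt a (g p) with hgp | hgp
  · -- `g ≥ a` on `[c, p]` dominates the water there, and `f - g` increases strictly on `[p, zg]`.
    have hleft : ∫ t in c..p, (max (a - f t) 0) ^ 2 ≤ ∫ t in c..p, (f t - g t) ^ 2 :=
      intervalIntegral.integral_mono_on hcp.le
        ((intervalIntegrable_comp_of_uniqueMinOn hf hz hf hz (fun q => (max (a - q.1) 0) ^ 2)
          (by fun_prop)).mono_Icc zero_le_one ⟨hc, by linarith⟩ ⟨by linarith, by linarith⟩)
        hDcp fun t ht => sq_max_sub_le_sq_sub <|
          hgp.trans (hganti.antitoneOn ⟨ht.1, by linarith [ht.2]⟩ ⟨hcp.le, hpzg'.le⟩ ht.2)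
    have hright : 0 < ∫ t in p..zg, (f t - g t) ^ 2 :=
      StrictMonoOn.integral_sq_pos (fun s hs t ht hst => by
        linarith [hfmono hs ht hst.le,
          hganti ⟨by linarith [hs.1], hs.2⟩ ⟨by linarith [ht.1], ht.2⟩ hst]) hpzg' hDpz
    linarith
  · -- `f > a > g` on `[p, zg]`, which holds the reflected water.
    have hR : IntervalIntegrable (fun t => (max (f t - a) 0) ^ 2) volume p zg :=
      (intervalIntegrable_comp_of_uniqueMinOn hf hz hf hz (fun q => (max (q.1 - a) 0) ^ 2)
        (by fun_prop)).mono_Icc zero_le_one ⟨by linarith, by linarith⟩ ⟨by linarith, hzg1⟩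
    have hrefl := integral_water_le_integral_reflect hf hz hc hcp.le (by linarith) hap.le
    have hwider : ∫ t in p..2 * p - c, (max (f t - a) 0) ^ 2 ≤
        ∫ t in p..zg, (max (f t - a) 0) ^ 2 :=
      intervalIntegral.integral_mono_interval le_rfl (by linarith) hpzg
        (Filter.Eventually.of_forall fun t => sq_nonneg _) hR
    have hgain := intervalIntegral.intervalIntegral_pos_of_pos_on (hDpz.sub hR)
      (fun t ht => sub_pos.2 <| sq_max_sub_lt_sq_sub
        ((hganti.antitoneOn ⟨by linarith, hpzg'.le⟩ ⟨by linarith [ht.1], ht.2.le⟩ ht.1.le).trans_lt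
          hgp)
        (hap.trans_le (hfmono (left_mem_Icc.2 hpzg'.le) (Ioo_subset_Icc_self ht) ht.1.le)))
      hpzg'
    rw [intervalIntegral.integral_sub hDpz hR] at hgain
    linarith [intervalIntegral.integral_nonneg (μ := volume) hcp.le fun t _ =>
      sq_nonneg (f t - g t)]

theorem le_add_three_mul_of_levelSet {f g : ℝ → ℝ} {z zg a ρ ε : ℝ}
    (hf : ConvexOn ℝ (Icc 0 1) f) (hz : UniqueMinOn f z)
    (hg : ConvexOn ℝ (Icc 0 1) g) (hzg : UniqueMinOn g zg)
    (hza : f z ≤ a) (hρ : ∀ t ∈ Icc (0:ℝ) 1, f t ≤ a → |t - z| ≤ ρ)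
    (hwater : ε ^ 2 ≤ ∫ t in (0:ℝ)..1, (max (a - f t) 0) ^ 2)
    (hfg : ∫ t in (0:ℝ)..1, (f t - g t) ^ 2 ≤ ε ^ 2) :
    zg ≤ z + 3 * ρ := by
  by_contra! hlt
  have hρ0 : 0 ≤ ρ := by simpa using hρ z hz.1 hza
  have hfa : ∀ t ∈ Icc (0:ℝ) 1, ρ < |t - z| → a < f t := fun t ht h =>
    lt_of_not_ge fun h' => h.not_ge (hρ t ht h')
  -- `p` lies just right of the level set `{f ≤ a} ⊆ [z - ρ, z + ρ]`, `q` at or left of it,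
  -- with room `2p - q < zg` to reflect the water about `p`.
  set δ := (zg - z - 3 * ρ) / 4 with hδ
  have hδ0 : 0 < δ := by linarith
  set p := z + ρ + δ
  set q := max 0 (z - ρ - δ)
  have hq0 : 0 ≤ q := le_max_left _ _
  have hqp : q < p := max_lt (by linarith [hz.1.1]) (by linarith)
  have h2pq : 2 * p - q ≤ zg := by linarith [le_max_right 0 (z - ρ - δ)]
  have hzg1 := hzg.1.2
  have hfp : a < f p :=
    hfa p ⟨by linarith [hz.1.1], by linarith⟩ (by rw [abs_of_pos (by linarith)]; linarith)
  have hW : ∫ t in (0:ℝ)..1, (max (a - f t) 0) ^ 2 = ∫ t in q..p, (max (a - f t) 0) ^ 2 := by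
    refine integral_water_eq_of_le_off hq0 hqp.le (by linarith) fun t ht htqp =>
      (hfa t (Ioc_subset_Icc_self ht) ?_).le
    rw [mem_Ioc, not_and_or, not_lt, not_le] at htqp
    rw [lt_abs]
    rcases htqp with htq | hpt
    · rcases le_max_iff.1 htq with h | h
      · linarith [ht.1]
      · right; linarith
    · left; linarith
  have hD : ∫ t in q..zg, (f t - g t) ^ 2 ≤ ∫ t in (0:ℝ)..1, (f t - g t) ^ 2 :=
    intervalIntegral.integral_mono_interval hq0 (by linarith) hzg1
      (Filter.Eventually.of_forall fun t => sq_nonneg _)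
      (intervalIntegrable_comp_of_uniqueMinOn hf hz hg hzg (fun q => (q.1 - q.2) ^ 2)
        (by fun_prop))
  linarith [integral_water_lt_integral_sq_sub hf hz hg hzg hq0 hqp (by linarith) h2pq hfp]

theorem abs_sub_le_three_mul_of_levelSet {f g : ℝ → ℝ} {z zg a ρ ε : ℝ}
    (hf : ConvexOn ℝ (Icc 0 1) f) (hz : UniqueMinOn f z)
    (hg : ConvexOn ℝ (Icc 0 1) g) (hzg : UniqueMinOn g zg)
    (hza : f z ≤ a) (hρ : ∀ t ∈ Icc (0:ℝ) 1, f t ≤ a → |t - z| ≤ ρ)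
    (hwater : ε ^ 2 ≤ ∫ t in (0:ℝ)..1, (max (a - f t) 0) ^ 2)
    (hfg : ∫ t in (0:ℝ)..1, (f t - g t) ^ 2 ≤ ε ^ 2) :
    |z - zg| ≤ 3 * ρ := by
  have hright := le_add_three_mul_of_levelSet hf hz hg hzg hza hρ hwater hfg
  have hleft := le_add_three_mul_of_levelSet hf.comp_one_sub hz.comp_one_sub hg.comp_one_sub
    hzg.comp_one_sub (by simpa using hza)
    (fun t ht hft => by
      rw [show t - (1 - z) = -(1 - t - z) by ring, abs_neg]
      exact hρ (1 - t) ⟨by linarith [ht.2], by linarith [ht.1]⟩ hft)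
    (hwater.trans_eq (integral_zero_one_comp_one_sub fun t => (max (a - f t) 0) ^ 2).symm)
    ((integral_zero_one_comp_one_sub fun t => (f t - g t) ^ 2).trans_le hfg)
  rw [abs_sub_le_iff]
  constructor <;> linarith

theorem abs_sub_le_rhoZ {f : ℝ → ℝ} {z ε Mf t : ℝ} (hz : z ∈ Icc (0:ℝ) 1) (ht : t ∈ Icc (0:ℝ) 1)
    (hft : f t ≤ rhoM ε f Mf + Mf) : |t - z| ≤ rhoZ ε f z Mf :=
  le_csSup ⟨1, by
    rintro _ ⟨s, hs, rfl, -⟩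
    exact abs_sub_le_of_nonneg_of_le hs.1 hs.2 hz.1 hz.2⟩ ⟨t, ht, rfl, hft⟩

theorem omegaZ_le_three_mul_rhoZ {f : ℝ → ℝ} {z ε : ℝ} (hf : ConvexOn ℝ (Icc 0 1) f)
    (hz : UniqueMinOn f z) (hε : 0 ≤ ε) : omegaZ ε f z ≤ 3 * rhoZ ε f z (f z) :=
  csSup_le ⟨_, f, z, hf, hz, (L2_self f).trans_le hε, rfl⟩ <| by
    rintro _ ⟨g, zg, hg, hzg, hfg, rfl⟩
    exact abs_sub_le_three_mul_of_levelSet hf hz hg hzg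
      (le_add_of_nonneg_left (rhoM_nonneg hf hz hε)) (fun t ht hft => abs_sub_le_rhoZ hz.1 ht hft)
      (sq_le_integral_water hf hz hε) ((Real.sqrt_le_left hε).1 hfg)

/-- Proposition 2.2 for the minimizer: ρ_z(ε;f) ≤ ω_z(ε;f) ≤ 3ρ_z(ε;f). -/
theorem stmt5 (f : ℝ → ℝ) (z ε : ℝ)
    (hf : ConvexOn ℝ (Icc (0:ℝ) 1) f) (hz : UniqueMinOn f z) (hε : 0 < ε) :
    rhoZ ε f z (f z) ≤ omegaZ ε f z ∧ omegaZ ε f z ≤ 3 * rhoZ ε f z (f z) :=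
  ⟨rhoZ_le_omegaZ hf hz hε.le, omegaZ_le_three_mul_rhoZ hf hz hε.le⟩
end

section
/- For any convex function f in F and any r > 0, there exists a convex function g in F with ‖f − g‖_2 = r such that |Z(g) − Z(f)| · |M(g) − M(f)|^2 ≥ r^2 / 2. -/
open MeasureTheory Set

/-!
Write `m = f z`. Raising `f` to `max f h` costs, in squared L² distance, the integral of
`((h - f)⁺)²`. Let `u` be the least level whose truncation `max f u` costs at least `r²`. The
sublevel set `{f < u}` is not contained in the `r² / (2 (u - m)²)`-neighbourhood of `z`: otherwise,
since `(u - f)⁺ < u - m` away from `z`, the truncation would cost strictly less than `r²`. Hence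
there are a point `w` and a level `v < u` with `f w ≤ v` and `2 |w - z| (v - m)² ≥ r²`. The cost of
`max f (v + s |· - w|)` is convex, hence continuous, in the slope `s`, is below `r²` at `s = 0` and
unbounded, so some `s > 0` gives distance exactly `r`; the result is convex with unique minimizer
`w` and minimum `v`.
-/

open Filter Topology

noncomputable def liftEnergy (f h : ℝ → ℝ) : ℝ :=
  ∫ t in (0:ℝ)..1, max (h t - f t) 0 ^ 2

lemma L2_sup_eq_sqrt_liftEnergy (f h : ℝ → ℝ) :
    L2 f (fun t => max (f t) (h t)) = √(liftEnergy f h) := by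
  unfold L2 liftEnergy
  congr 1
  refine intervalIntegral.integral_congr fun t _ => ?_
  dsimp only
  rcases le_total (f t) (h t) with hle | hle
  · rw [max_eq_right hle, max_eq_left (sub_nonneg.2 hle)]; ring
  · rw [max_eq_left hle, max_eq_right (sub_nonpos.2 hle)]; ring

lemma convexOn_sq_max_zero : ConvexOn ℝ univ (fun x : ℝ => max x 0 ^ 2) :=
  ((convexOn_id convex_univ).sup (convexOn_const 0 convex_univ)).pow
    (fun x _ => le_max_right x 0) 2

lemma convexOn_tent (v w : ℝ) {s : ℝ} (hs : 0 ≤ s) :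
    ConvexOn ℝ univ (fun t : ℝ => v + s * |t - w|) := by
  have h : ConvexOn ℝ univ (fun t : ℝ => |t - w|) := by
    simpa [Function.comp_def, neg_add_eq_sub] using convexOn_univ_norm.translate_right (-w)
  exact (convexOn_const v convex_univ).add (h.smul hs)

lemma ConvexOn.aestronglyMeasurable_Ioc {f : ℝ → ℝ} {a b : ℝ} (hf : ConvexOn ℝ (Icc a b) f) :
    AEStronglyMeasurable f (volume.restrict (Ioc a b)) := by
  have hcont := hf.continuousOn_interior
  rw [interior_Icc] at hcont
  rw [← Measure.restrict_congr_set Ioo_ae_eq_Ioc]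
  exact hcont.aestronglyMeasurable measurableSet_Ioo

lemma ConvexOn.le_max_zero_one {f : ℝ → ℝ} {t : ℝ} (hf : ConvexOn ℝ (Icc (0:ℝ) 1) f)
    (ht : t ∈ Icc (0:ℝ) 1) : f t ≤ max (f 0) (f 1) :=
  hf.le_on_segment (left_mem_Icc.2 zero_le_one) (right_mem_Icc.2 zero_le_one)
    (by rwa [segment_eq_Icc zero_le_one])

lemma UniqueMinOn.le {f : ℝ → ℝ} {z t : ℝ} (hz : UniqueMinOn f z) (ht : t ∈ Icc (0:ℝ) 1) :
    f z ≤ f t := by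
  rcases eq_or_ne t z with rfl | hne
  · rfl
  · exact (hz.2 t ht hne).le

lemma intervalIntegral_indicator_Icc_const_le {a b p q c : ℝ} (hab : a ≤ b) (hpq : p ≤ q)
    (hc : 0 ≤ c) : ∫ t in a..b, (Icc p q).indicator (fun _ => c) t ≤ (q - p) * c := by
  rw [intervalIntegral.integral_of_le hab, integral_indicator_const _ measurableSet_Icc,
    smul_eq_mul, measureReal_restrict_apply measurableSet_Icc, ← Real.volume_real_Icc_of_le hpq]
  exact mul_le_mul_of_nonneg_right
    (measureReal_mono inter_subset_left measure_Icc_lt_top.ne) hc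

section
variable {f : ℝ → ℝ} {z : ℝ} (hf : ConvexOn ℝ (Icc (0:ℝ) 1) f) (hz : UniqueMinOn f z)
include hf hz

lemma intervalIntegrable_sq_max_sub {h : ℝ → ℝ} (hh : Continuous h) :
    IntervalIntegrable (fun t => max (h t - f t) 0 ^ 2) volume 0 1 := by
  have hdom : Continuous fun t => max (h t - f z) 0 ^ 2 := by fun_prop
  refine (hdom.intervalIntegrable 0 1).mono_fun ?_ ?_ <;> rw [uIoc_of_le zero_le_one]
  · exact ((hh.aestronglyMeasurable.sub hf.aestronglyMeasurable_Ioc).sup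
      aestronglyMeasurable_const).pow 2
  · filter_upwards [ae_restrict_mem measurableSet_Ioc] with t ht
    have hzt := hz.le (Ioc_subset_Icc_self ht)
    simp only [Real.norm_eq_abs, abs_pow, sq_abs]
    gcongr

lemma convexOn_liftEnergy_add_mul {h₀ h₁ : ℝ → ℝ} (h₀c : Continuous h₀) (h₁c : Continuous h₁) :
    ConvexOn ℝ univ (fun c => liftEnergy f (fun t => h₀ t + c * h₁ t)) := by
  have hI (c : ℝ) : IntervalIntegrable (fun t => max (h₀ t + c * h₁ t - f t) 0 ^ 2) volume 0 1 :=
    intervalIntegrable_sq_max_sub hf hz (by fun_prop)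
  refine ⟨convex_univ, fun x _ y _ a b ha hb hab => ?_⟩
  simp only [liftEnergy, smul_eq_mul]
  rw [← intervalIntegral.integral_const_mul, ← intervalIntegral.integral_const_mul,
    ← intervalIntegral.integral_add ((hI x).const_mul a) ((hI y).const_mul b)]
  refine intervalIntegral.integral_mono_on zero_le_one (hI _)
    (((hI x).const_mul a).add ((hI y).const_mul b)) fun t _ => ?_
  have key := convexOn_sq_max_zero.2 (mem_univ (h₀ t + x * h₁ t - f t))
    (mem_univ (h₀ t + y * h₁ t - f t)) ha hb hab
  simp only [smul_eq_mul] at key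
  refine (le_of_eq ?_).trans key
  congr 2
  linear_combination (h₀ t - f t) * hab.symm

lemma continuous_liftEnergy_add_mul {h₀ h₁ : ℝ → ℝ} (h₀c : Continuous h₀) (h₁c : Continuous h₁) :
    Continuous (fun c => liftEnergy f (fun t => h₀ t + c * h₁ t)) := by
  have := (convexOn_liftEnergy_add_mul hf hz h₀c h₁c).continuousOn_interior
  rwa [interior_univ, continuousOn_univ] at this

lemma liftEnergy_const_le (u : ℝ) : liftEnergy f (fun _ => u) ≤ max (u - f z) 0 ^ 2 := by
  calc liftEnergy f (fun _ => u) ≤ ∫ _ in (0:ℝ)..1, max (u - f z) 0 ^ 2 := by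
        refine intervalIntegral.integral_mono_on zero_le_one
          (intervalIntegrable_sq_max_sub hf hz continuous_const) intervalIntegrable_const
          fun t ht => ?_
        have := hz.le ht
        gcongr
    _ = max (u - f z) 0 ^ 2 := by simp

lemma le_liftEnergy_tent {B v s w : ℝ} (hB : ∀ t ∈ Icc (0:ℝ) 1, f t ≤ B) (hs : 0 ≤ s)
    (hw : w ∈ Icc (0:ℝ) 1) :
    2 * (v - B) - 1 + s / 6 ≤ liftEnergy f (fun t => v + s * |t - w|) := by
  have hsq : Continuous fun t : ℝ => 2 * s * (t - w) ^ 2 := by fun_prop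
  calc 2 * (v - B) - 1 + s / 6 ≤ 2 * (v - B) - 1 + 2 * s * ((1 - w) ^ 3 + w ^ 3) / 3 := by
        nlinarith [sq_nonneg (w - 1 / 2)]
    _ = ∫ t in (0:ℝ)..1, (2 * (v - B) - 1 + 2 * s * (t - w) ^ 2) := by
        rw [intervalIntegral.integral_add intervalIntegrable_const (hsq.intervalIntegrable 0 1),
          intervalIntegral.integral_const_mul, intervalIntegral.integral_comp_sub_right
            (fun t => t ^ 2), integral_pow, intervalIntegral.integral_const, smul_eq_mul]
        ring
    _ ≤ liftEnergy f (fun t => v + s * |t - w|) := by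
        refine intervalIntegral.integral_mono_on zero_le_one
          ((continuous_const.add hsq).intervalIntegrable 0 1)
          (intervalIntegrable_sq_max_sub hf hz (by fun_prop)) fun t ht => ?_
        -- `X ^ 2 ≥ 2 X - 1`, where `X ≥ v - B + s (t - w) ^ 2` because `|t - w| ≤ 1`
        have hdist : |t - w| ≤ 1 :=
          abs_sub_le_iff.2 ⟨by linarith [ht.2, hw.1], by linarith [ht.1, hw.2]⟩
        have hsq_le : (t - w) ^ 2 ≤ |t - w| := by
          rw [← sq_abs]
          nlinarith [abs_nonneg (t - w)]
        have hX : v - B + s * (t - w) ^ 2 ≤ max (v + s * |t - w| - f t) 0 :=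
          le_max_of_le_left (by nlinarith [hB t ht])
        nlinarith [sq_nonneg (max (v + s * |t - w| - f t) 0 - 1)]

lemma tendsto_liftEnergy_tent_atTop (v : ℝ) {w : ℝ} (hw : w ∈ Icc (0:ℝ) 1) :
    Tendsto (fun s => liftEnergy f (fun t => v + s * |t - w|)) atTop atTop :=
  tendsto_atTop_mono' _
    ((eventually_ge_atTop 0).mono fun _ hs => le_liftEnergy_tent hf hz
      (fun _ => hf.le_max_zero_one) hs hw)
    (tendsto_atTop_add_const_left _ _ (tendsto_id.atTop_div_const (by norm_num)))

lemma tendsto_liftEnergy_const_atTop :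
    Tendsto (fun u => liftEnergy f (fun _ => u)) atTop atTop := by
  refine tendsto_atTop_atTop.2 fun b => ⟨(b + 1) / 2 + max (f 0) (f 1), fun u hu => ?_⟩
  have := le_liftEnergy_tent hf hz (v := u) (fun _ => hf.le_max_zero_one) le_rfl
    (left_mem_Icc.2 zero_le_one)
  simp only [zero_mul, add_zero, zero_div] at this
  linarith

lemma exists_sup_tent_L2_eq {r v w : ℝ} (hr : 0 < r) (hw : w ∈ Icc (0:ℝ) 1) (hv : f w ≤ v)
    (hlt : liftEnergy f (fun _ => v) < r ^ 2) :
    ∃ g, ConvexOn ℝ (Icc (0:ℝ) 1) g ∧ UniqueMinOn g w ∧ g w = v ∧ L2 f g = r := by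
  set ψ := fun s => liftEnergy f (fun t => v + s * |t - w|)
  have hψ0 : ψ 0 < r ^ 2 := by simpa [ψ] using hlt
  obtain ⟨s, hs0, hψs⟩ : r ^ 2 ∈ ψ '' Ici 0 :=
    intermediate_value_Ici
      (continuous_liftEnergy_add_mul hf hz continuous_const (by fun_prop)).continuousOn
      (tendsto_liftEnergy_tent_atTop hf hz v hw) hψ0.le
  have hs : 0 < s := lt_of_le_of_ne hs0 (by rintro rfl; exact hψ0.ne hψs)
  refine ⟨fun t => max (f t) (v + s * |t - w|), hf.sup ((convexOn_tent v w hs.le).subset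
    (subset_univ _) (convex_Icc 0 1)), ⟨hw, fun t _ htw => ?_⟩, by simpa using hv, ?_⟩
  · have : 0 < s * |t - w| := mul_pos hs (abs_pos.2 (sub_ne_zero.2 htw))
    simp only [sub_self, abs_zero, mul_zero, add_zero, max_eq_right hv]
    exact lt_max_of_lt_right (by linarith)
  · rw [L2_sup_eq_sqrt_liftEnergy]
    exact (congrArg Real.sqrt hψs).trans (Real.sqrt_sq hr.le)

lemma liftEnergy_const_lt_of_sublevel_subset {u δ : ℝ} (hu : f z < u) (hδ : 0 < δ)
    (hsub : ∀ t ∈ Icc (0:ℝ) 1, f t < u → |t - z| ≤ δ) :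
    liftEnergy f (fun _ => u) < 2 * δ * (u - f z) ^ 2 := by
  set ρ := u - f z
  set J := Icc (z - δ) (z + δ)
  obtain ⟨hz0, hz1⟩ := hz.1
  have hle (t) (ht : t ∈ Icc (0:ℝ) 1) : max (u - f t) 0 ^ 2 ≤ ρ ^ 2 :=
    pow_le_pow_left₀ (le_max_right _ _) (max_le (by linarith [hz.le ht]) (by linarith)) 2
  have hlt (t) (ht : t ∈ Icc (0:ℝ) 1) (hne : t ≠ z) : max (u - f t) 0 ^ 2 < ρ ^ 2 :=
    pow_lt_pow_left₀ (max_lt (by linarith [hz.2 t ht hne]) (by linarith)) (le_max_right _ _)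
      two_ne_zero
  have hzero (t) (ht : t ∈ Icc (0:ℝ) 1) (hJ : t ∉ J) : max (u - f t) 0 = 0 := by
    refine max_eq_right (sub_nonpos.2 (not_lt.1 fun hft => hJ ?_))
    obtain ⟨h1, h2⟩ := abs_sub_le_iff.1 (hsub t ht hft)
    exact ⟨by linarith, by linarith⟩
  have hsubset : Ioo (max 0 (z - δ)) (min 1 (z + δ)) \ {z} ⊆
      {t | max (u - f t) 0 ^ 2 < J.indicator (fun _ => ρ ^ 2) t} ∩ Ioc 0 1 := by
    rintro t ⟨⟨hat, htb⟩, htz⟩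
    have ht : t ∈ Ioc (0:ℝ) 1 := ⟨(le_max_left _ _).trans_lt hat, htb.le.trans (min_le_left _ _)⟩
    have hJ : t ∈ J := ⟨(le_max_right _ _).trans hat.le, htb.le.trans (min_le_right _ _)⟩
    refine ⟨?_, ht⟩
    rw [mem_ofPred_eq, indicator_of_mem hJ]
    exact hlt t (Ioc_subset_Icc_self ht) htz
  calc liftEnergy f (fun _ => u) < ∫ t in (0:ℝ)..1, J.indicator (fun _ => ρ ^ 2) t := by
        refine intervalIntegral.integral_lt_integral_of_ae_le_of_measure_setOfPred_lt_ne_zero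
          zero_le_one (intervalIntegrable_sq_max_sub hf hz continuous_const)
          ((integrable_indicator_iff measurableSet_Icc).2
            (integrableOn_const measure_Icc_lt_top.ne)).intervalIntegrable ?_ ?_
        · filter_upwards [ae_restrict_mem measurableSet_Ioc] with t ht
          have ht' := Ioc_subset_Icc_self ht
          by_cases hJ : t ∈ J
          · rw [indicator_of_mem hJ]; exact hle t ht'
          · rw [indicator_of_notMem hJ, hzero t ht' hJ]; norm_num
        · rw [Measure.restrict_apply' measurableSet_Ioc]
          refine (lt_of_lt_of_le ?_ (measure_mono hsubset)).ne'
          rw [measure_sdiff_null (measure_singleton z), Real.volume_Ioo, ENNReal.ofReal_pos,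
            sub_pos]
          exact max_lt (lt_min one_pos (by linarith)) (lt_min (by linarith) (by linarith))
    _ ≤ (z + δ - (z - δ)) * ρ ^ 2 :=
        intervalIntegral_indicator_Icc_const_le zero_le_one (by linarith) (sq_nonneg ρ)
    _ = 2 * δ * ρ ^ 2 := by ring

lemma exists_least_level_le_liftEnergy {r : ℝ} (hr : 0 < r) :
    ∃ u, r ^ 2 ≤ liftEnergy f (fun _ => u) ∧ ∀ v < u, liftEnergy f (fun _ => v) < r ^ 2 := by
  set S := {u | r ^ 2 ≤ liftEnergy f (fun _ => u)}
  have hcont : Continuous fun u => liftEnergy f (fun _ => u) := by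
    simpa using continuous_liftEnergy_add_mul hf hz (h₀ := fun _ => 0) (h₁ := fun _ => 1)
      continuous_const continuous_const
  have hne : S.Nonempty :=
    ((tendsto_liftEnergy_const_atTop hf hz).eventually_ge_atTop (r ^ 2)).exists
  have hbdd : BddBelow S := ⟨f z, fun u hu => by
    by_contra! hlt
    have := hu.trans (liftEnergy_const_le hf hz u)
    rw [max_eq_right (by linarith)] at this
    nlinarith⟩
  exact ⟨sInf S, (isClosed_le continuous_const hcont).csInf_mem hne hbdd,
    fun v hv => not_le.1 (notMem_of_lt_csInf (s := S) hv hbdd)⟩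

lemma exists_far_sublevel_point {r : ℝ} (hr : 0 < r) :
    ∃ w v, w ∈ Icc (0:ℝ) 1 ∧ f w ≤ v ∧ liftEnergy f (fun _ => v) < r ^ 2 ∧
      r ^ 2 ≤ 2 * |w - z| * (v - f z) ^ 2 := by
  obtain ⟨u, hu, hbelow⟩ := exists_least_level_le_liftEnergy hf hz hr
  have hρ : r ≤ u - f z := by
    have := (pow_le_pow_iff_left₀ hr.le (le_max_right _ _) two_ne_zero).1
      (hu.trans (liftEnergy_const_le hf hz u))
    exact (le_max_iff.1 this).resolve_right hr.not_ge
  have hρ0 : 0 < u - f z := hr.trans_le hρ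
  have hρ2 : 0 < 2 * (u - f z) ^ 2 := by positivity
  by_contra! H
  have hsub (t) (ht : t ∈ Icc (0:ℝ) 1) (hft : f t < u) :
      |t - z| ≤ r ^ 2 / (2 * (u - f z) ^ 2) := by
    rw [le_div_iff₀ hρ2]
    have hlim : Tendsto (fun v => 2 * |t - z| * (v - f z) ^ 2) (𝓝[<] u)
        (𝓝 (2 * |t - z| * (u - f z) ^ 2)) :=
      ((by fun_prop : Continuous fun v => 2 * |t - z| * (v - f z) ^ 2).tendsto u).mono_left
        nhdsWithin_le_nhds
    have := le_of_tendsto hlim (by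
      filter_upwards [Ioo_mem_nhdsLT hft] with v hv
      exact (H t v ht hv.1.le (hbelow v hv.2)).le)
    linarith
  have := liftEnergy_const_lt_of_sublevel_subset hf hz (by linarith)
    (div_pos (by positivity) hρ2) hsub
  rw [show 2 * (r ^ 2 / (2 * (u - f z) ^ 2)) * (u - f z) ^ 2 = r ^ 2 by
    field_simp [hρ0.ne']] at this
  linarith

end

/-- Entanglement inequality: for convex f with unique minimizer z and any r > 0,
there is a convex g with unique minimizer w, ‖f - g‖₂ = r, and
|Z(g) - Z(f)|·|M(g) - M(f)|² ≥ r²/2. -/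
theorem stmt6 (f : ℝ → ℝ) (z r : ℝ)
    (hf : ConvexOn ℝ (Icc (0:ℝ) 1) f) (hz : UniqueMinOn f z) (hr : 0 < r) :
    ∃ g w, ConvexOn ℝ (Icc (0:ℝ) 1) g ∧ UniqueMinOn g w ∧ L2 f g = r ∧
      r ^ 2 / 2 ≤ |w - z| * |g w - f z| ^ 2 := by
  obtain ⟨w, v, hw, hwv, hlt, hineq⟩ := exists_far_sublevel_point hf hz hr
  obtain ⟨g, hg, hgmin, hgw, hL2⟩ := exists_sup_tent_L2_eq hf hz hr hw hwv hlt
  refine ⟨g, w, hg, hgmin, hL2, ?_⟩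
  rw [hgw, abs_of_nonneg (sub_nonneg.2 ((hz.le hw).trans hwv))]
  linarith
end
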